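/- arXiv:1603.09613 — 6 statements merged into one kernel-verified Lean document; each statement's English description precedes it below -/
import Mathlib

section
/- The following three conditions are equivalent: (i) G is bipartite; (ii) every vertex (extreme point) of FRAC(G) lies in ℤ^d; (iii) every vertex (extreme point) of Q(G) lies in ℤ^d. -/
open Set Pointwise

/-- The fractional stable set polytope `FRAC(G)` of a finite simple graph `G` on `Fin d`. -/
def FRAC (d : ℕ) (G : SimpleGraph (Fin d)) : Set (Fin d → ℝ) :=
  {x | (∀ i, 0 ≤ x i) ∧ ∀ i j, G.Adj i j → x i + x j ≤ 1}

/-- The polytope `Q(G) = 3·FRAC(G) − (1,…,1)`. -/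
def Qpoly (d : ℕ) (G : SimpleGraph (Fin d)) : Set (Fin d → ℝ) :=
  {x | (∀ i, -1 ≤ x i) ∧ ∀ i j, G.Adj i j → x i + x j ≤ 1}

/-- The number of lattice points of a subset of `ℝ^d`. -/
noncomputable def latticePts {d : ℕ} (s : Set (Fin d → ℝ)) : ℕ :=
  (s ∩ {x | ∀ i, ∃ z : ℤ, x i = (z : ℝ)}).ncard

/-- `π : Fin d → ℤ` is a signed permutation word on `[d] = {1,…,d}`:
each letter is one of `±1,…,±d` and the absolute values form a permutation of `1,…,d`. -/
def IsSignedPermWord (d : ℕ) (π : Fin d → ℤ) : Prop :=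
  (∀ p, 1 ≤ (π p).natAbs ∧ (π p).natAbs ≤ d) ∧
    Function.Injective fun p => (π p).natAbs

/-- The number of descents of a signed permutation word: position `i` (0-based) is a
descent if `i` is not the last position and `π i > π (i+1)`, or `i` is the last
position and `π i > 0`. -/
noncomputable def des {d : ℕ} (π : Fin d → ℤ) : ℕ :=
  Set.ncard {i : Fin d |
    (∃ h : (i : ℕ) + 1 < d, π ⟨(i : ℕ) + 1, h⟩ < π i) ∨ ((i : ℕ) + 1 = d ∧ 0 < π i)}

/-- Steingrímsson's set `Π(G)`: signed permutation words such that for every edge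
`(i,j)` of `G`, if the letter `+i` appears then the letter `−j` precedes it.
(Vertex `v : Fin d` corresponds to the letter `v+1`.) -/
def PiSet {d : ℕ} (G : SimpleGraph (Fin d)) : Set (Fin d → ℤ) :=
  {π | IsSignedPermWord d π ∧ ∀ i j : Fin d, G.Adj i j →
    ∀ p : Fin d, π p = ((i : ℕ) + 1 : ℤ) →
      ∃ q : Fin d, q < p ∧ π q = -(((j : ℕ) + 1 : ℤ))}

/-- The dual (polar) of a subset of `ℝ^d`. -/
def polarDual {d : ℕ} (P : Set (Fin d → ℝ)) : Set (Fin d → ℝ) :=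
  {x | ∀ y ∈ P, (∑ i, x i * y i) ≤ 1}

/-- The vertex set `{e_i + e_j : (i,j) ∈ E(G)} ∪ {−e_1,…,−e_d}` of the dual of `Q(G)`. -/
def Vset (d : ℕ) (G : SimpleGraph (Fin d)) : Set (Fin d → ℝ) :=
  {x | ∃ i j, G.Adj i j ∧ x = Pi.single i 1 + Pi.single j 1} ∪
    {x | ∃ i, x = -Pi.single i 1}

/-- The Eulerian number `A(k,i)`: the number of permutations of `{1,…,k}` with
exactly `i` descents. -/
noncomputable def eulerianNumber (k i : ℕ) : ℕ :=
  Set.ncard {σ : Equiv.Perm (Fin k) |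
    Set.ncard {j : Fin k | ∃ h : (j : ℕ) + 1 < k, σ ⟨(j : ℕ) + 1, h⟩ < σ j} = i}

/-- The configuration `A ⊂ ℤ^{d+1}` consisting of `(0,1)`, `(e_i+e_j,1)` for edges
`(i,j)`, and `(−e_i,1)`. -/
def Aset (d : ℕ) (G : SimpleGraph (Fin d)) : Set (Fin (d + 1) → ℤ) :=
  {a | a = Fin.snoc (0 : Fin d → ℤ) (1 : ℤ) ∨
    (∃ i j, G.Adj i j ∧ a = Fin.snoc (Pi.single i 1 + Pi.single j 1) (1 : ℤ)) ∨
    ∃ i, a = Fin.snoc (-Pi.single i 1) (1 : ℤ)}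

/-! If `G` is 2-coloured, a non-integral point `v` of `edgePolytope G c` (with `c` an integer)
can be moved to `v ± t w`, where `w` is `±1`, according to colour, on the non-integral
coordinates and `0` on the others. A constraint that is tight at `v` involves either only
integral coordinates or two non-integral coordinates of adjacent, hence differently coloured,
vertices, so it stays tight; the other constraints survive for small `t`. So `v` is not extreme.

Conversely, an odd closed walk gives the extreme point that is `1/2` on the walk and `c` off
it: any segment through it keeps the tight constraints tight, and tight edge constraints
along a closed walk of odd length force every coordinate on it to be `1/2`. -/

open Filter Topology

theorem LinearMap.eq_of_mem_openSegment_of_le {E : Type*} [AddCommGroup E] [Module ℝ E]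
    (f : E →ₗ[ℝ] ℝ) {x y z : E} (hx : x ∈ openSegment ℝ y z) (hy : f y ≤ f x)
    (hz : f z ≤ f x) : f y = f x := by
  have hfx : f x ∈ openSegment ℝ (f y) (f z) := by
    have himage := image_openSegment ℝ f.toAffineMap y z
    simp only [LinearMap.coe_toAffineMap] at himage
    exact himage ▸ mem_image_of_mem f hx
  rcases eq_or_ne (f y) (f z) with h | h
  · rw [h, openSegment_same] at hfx
    rw [h, hfx]
  · rw [openSegment_eq_Ioo' h] at hfx
    exact absurd hfx.2 (not_lt.2 (max_le hy hz))

theorem notMem_extremePoints_of_add_mem_of_sub_mem {E : Type*} [AddCommGroup E] [Module ℝ E]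
    {A : Set E} {x w : E} (hw : w ≠ 0) (hadd : x + w ∈ A) (hsub : x - w ∈ A) :
    x ∉ A.extremePoints ℝ := fun hx => by
  have hseg : x ∈ openSegment ℝ (x + w) (x - w) :=
    ⟨1 / 2, 1 / 2, by norm_num, by norm_num, by norm_num, by module⟩
  exact hw (by simpa using hx.2 hadd hsub hseg)

theorem notMem_extremePoints_of_eventually_add_smul_mem {E : Type*} [AddCommGroup E]
    [Module ℝ E] {A : Set E} {x w : E} (hw : w ≠ 0) (h : ∀ᶠ t in 𝓝 (0 : ℝ), x + t • w ∈ A) :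
    x ∉ A.extremePoints ℝ := by
  have hneg : Tendsto (fun t : ℝ => -t) (𝓝 0) (𝓝 0) := by
    simpa using (continuous_neg (G := ℝ)).tendsto 0
  obtain ⟨t, ⟨hadd, hsub⟩, ht⟩ :=
    ((h.and (hneg.eventually h)).filter_mono nhdsWithin_le_nhds).and
      (self_mem_nhdsWithin (s := {0}ᶜ)) |>.exists
  refine notMem_extremePoints_of_add_mem_of_sub_mem (smul_ne_zero ht hw) hadd ?_
  simpa [sub_eq_add_neg] using hsub

theorem eventually_add_mul_le {p q b : ℝ} (hp : p ≤ b) (hq : p = b → q = 0) :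
    ∀ᶠ t in 𝓝 (0 : ℝ), p + t * q ≤ b := by
  rcases hp.lt_or_eq with hp | hp
  · have : Tendsto (fun t : ℝ => p + t * q) (𝓝 0) (𝓝 p) := by
      simpa using ((continuous_mul_const q).tendsto 0).const_add p
    exact (this.eventually_lt_const hp).mono fun _ => le_of_lt
  · simp [hq hp, hp]

namespace SimpleGraph

variable {V : Type*} {G : SimpleGraph V}

def edgePolytope (G : SimpleGraph V) (c : ℝ) : Set (V → ℝ) :=
  {x | (∀ i, c ≤ x i) ∧ ∀ i j, G.Adj i j → x i + x j ≤ 1}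

theorem Walk.sub_half_eq_of_forall_darts {f : V → ℝ} {s t : V} (p : G.Walk s t)
    (hf : ∀ e ∈ p.darts, f e.fst + f e.snd = 1) :
    f t - 1 / 2 = (-1) ^ p.length * (f s - 1 / 2) := by
  induction p with
  | nil => simp
  | cons h p ih =>
    simp only [darts_cons, List.mem_cons, forall_eq_or_imp] at hf
    rw [ih hf.2, length_cons, pow_succ]
    linear_combination (-1 : ℝ) ^ p.length * hf.1

theorem Walk.eq_half_of_odd_length {f : V → ℝ} {u : V} (p : G.Walk u u) (hodd : Odd p.length)
    (hf : ∀ e ∈ p.darts, f e.fst + f e.snd = 1) : f u = 1 / 2 := by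
  have := p.sub_half_eq_of_forall_darts hf
  rw [hodd.neg_one_pow] at this
  linarith

theorem integral_of_mem_extremePoints_edgePolytope [Fintype V] (hG : G.Colorable 2) {c : ℤ}
    {v : V → ℝ} (hv : v ∈ (G.edgePolytope c).extremePoints ℝ) (i : V) : ∃ z : ℤ, v i = z := by
  classical
  obtain ⟨col⟩ := hG
  by_contra hi
  let w : V → ℝ := fun j => if ∃ z : ℤ, v j = z then 0 else if col j = 0 then 1 else -1
  have hwi : w i ≠ 0 := by simp only [w, if_neg hi]; split_ifs <;> simp
  have hlow : ∀ j, v j = c → w j = 0 := fun j hj => by simp [w, hj]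
  have hedge : ∀ a b, G.Adj a b → v a + v b = 1 → w a + w b = 0 := by
    intro a b hab hsum
    by_cases ha : ∃ z : ℤ, v a = z
    · obtain ⟨z, hz⟩ := ha
      have hb : ∃ z : ℤ, v b = z := ⟨1 - z, by push_cast; linarith⟩
      simp [w, hb, hz]
    · have hb : ¬ ∃ z : ℤ, v b = z := fun ⟨z, hz⟩ => ha ⟨1 - z, by push_cast; linarith⟩
      have hcol := col.valid hab
      simp only [w, if_neg ha, if_neg hb]
      generalize col a = x, col b = y at hcol
      fin_cases x <;> fin_cases y <;> simp_all
  have hfeas : ∀ᶠ t in 𝓝 (0 : ℝ), v + t • w ∈ G.edgePolytope c := by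
    simp only [edgePolytope, mem_ofPred_eq, Pi.add_apply, Pi.smul_apply, smul_eq_mul,
      eventually_and, eventually_all]
    refine ⟨fun j => ?_, fun a b hab => ?_⟩
    · refine (eventually_add_mul_le (p := -v j) (q := -w j) (b := -c) (by linarith [hv.1.1 j])
        fun h => by simp [hlow j (by linarith)]).mono fun t ht => by linarith
    · refine (eventually_add_mul_le (hv.1.2 a b hab) (hedge a b hab)).mono fun t ht => by linarith
  exact notMem_extremePoints_of_eventually_add_smul_mem (fun h => hwi (congrFun h i)) hfeas hv

theorem indicator_half_mem_extremePoints_edgePolytope [DecidableEq V] {c : ℝ} (hc : c ≤ 1 / 2)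
    {u : V} (p : G.Walk u u) (hodd : Odd p.length) :
    (fun i => if i ∈ p.support then 1 / 2 else c) ∈ (G.edgePolytope c).extremePoints ℝ := by
  set v : V → ℝ := fun i => if i ∈ p.support then 1 / 2 else c
  have hv_le : ∀ i, v i ≤ 1 / 2 := fun i => by simp only [v]; split_ifs <;> linarith
  refine ⟨⟨fun i => ?_, fun i j _ => by linarith [hv_le i, hv_le j]⟩,
    fun y hy z hz hseg => funext fun i => ?_⟩
  · simp only [v]; split_ifs <;> linarith
  by_cases hi : i ∈ p.support
  · have htight : ∀ e ∈ p.darts, y e.fst + y e.snd = 1 := by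
      intro e he
      have hv : v e.fst + v e.snd = 1 := by
        norm_num [v, p.dart_fst_mem_support_of_mem_darts he,
          p.dart_snd_mem_support_of_mem_darts he]
      have := (LinearMap.proj (R := ℝ) (φ := fun _ : V => ℝ) e.fst + LinearMap.proj e.snd)
        |>.eq_of_mem_openSegment_of_le hseg
      simp only [LinearMap.add_apply, LinearMap.proj_apply] at this
      rw [this (by linarith [hy.2 _ _ e.adj]) (by linarith [hz.2 _ _ e.adj]), hv]
    have := (p.rotate i hi).eq_half_of_odd_length (by rwa [Walk.length_rotate]) fun e he =>
      htight e (((p.rotate_darts i hi).mem_iff).1 he)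
    simp [this, v, hi]
  · have := (-LinearMap.proj (R := ℝ) (φ := fun _ : V => ℝ) i).eq_of_mem_openSegment_of_le hseg
    simp only [LinearMap.neg_apply, LinearMap.proj_apply, neg_inj, neg_le_neg_iff] at this
    exact this (by simpa [v, hi] using hy.1 i) (by simpa [v, hi] using hz.1 i)

theorem colorable_two_iff_forall_extremePoints_edgePolytope_integral [Fintype V] {c : ℤ}
    (hc : c ≤ 0) :
    G.Colorable 2 ↔ ∀ v ∈ (G.edgePolytope c).extremePoints ℝ, ∀ i, ∃ z : ℤ, v i = z := by
  classical
  refine ⟨fun hG v hv => integral_of_mem_extremePoints_edgePolytope hG hv, fun h => ?_⟩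
  rw [two_colorable_iff_forall_loop_even]
  intro u p
  by_contra hodd
  have hc' : (c : ℝ) ≤ 1 / 2 := by linarith [(Int.cast_nonpos (R := ℝ)).2 hc]
  obtain ⟨z, hz⟩ := h _ (indicator_half_mem_extremePoints_edgePolytope hc' p
    (Nat.not_even_iff_odd.1 hodd)) u
  rw [if_pos p.start_mem_support] at hz
  have : (2 * z : ℤ) = 1 := by exact_mod_cast (by linarith : (2 : ℝ) * z = 1)
  omega

end SimpleGraph

theorem stmt5_general (d : ℕ) (G : SimpleGraph (Fin d)) :
    (G.Colorable 2 ↔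
      ∀ v ∈ Set.extremePoints ℝ (FRAC d G), ∀ i, ∃ z : ℤ, v i = (z : ℝ)) ∧
    (G.Colorable 2 ↔
      ∀ v ∈ Set.extremePoints ℝ (Qpoly d G), ∀ i, ∃ z : ℤ, v i = (z : ℝ)) := by
  have hFRAC : FRAC d G = G.edgePolytope (0 : ℤ) := by simp [FRAC, SimpleGraph.edgePolytope]
  have hQ : Qpoly d G = G.edgePolytope (-1 : ℤ) := by simp [Qpoly, SimpleGraph.edgePolytope]
  rw [hFRAC, hQ]
  exact ⟨SimpleGraph.colorable_two_iff_forall_extremePoints_edgePolytope_integral le_rfl,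
    SimpleGraph.colorable_two_iff_forall_extremePoints_edgePolytope_integral (by norm_num)⟩

/-- `G` is bipartite iff `FRAC(G)` is a lattice polytope iff
`Q(G)` is a lattice polytope. -/
theorem stmt5 (d : ℕ) (hd : 1 ≤ d) (G : SimpleGraph (Fin d))
    (hiso : ∀ i : Fin d, ∃ j, G.Adj i j) :
    (G.Colorable 2 ↔
      ∀ v ∈ Set.extremePoints ℝ (FRAC d G), ∀ i, ∃ z : ℤ, v i = (z : ℝ)) ∧
    (G.Colorable 2 ↔
      ∀ v ∈ Set.extremePoints ℝ (Qpoly d G), ∀ i, ∃ z : ℤ, v i = (z : ℝ)) :=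
  stmt5_general d G
end

section
/- The origin of ℝ^d is the unique lattice point belonging to the topological interior of Q(G); that is, (interior of Q(G)) ∩ ℤ^d = {(0,…,0)}. -/
open Set Pointwise

lemma isOpenMap_apply_add_apply {ι : Type*} (i j : ι) : IsOpenMap fun x : ι → ℝ => x i + x j := by
  refine (ContinuousLinearMap.proj (R := ℝ) (φ := fun _ : ι => ℝ) i + ContinuousLinearMap.proj j :
    (ι → ℝ) →L[ℝ] ℝ).isOpenMap_of_ne_zero fun h => ?_
  have h1 := congrArg (fun φ : (ι → ℝ) →L[ℝ] ℝ => φ fun _ => 1) h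
  norm_num at h1

lemma interior_Qpoly (d : ℕ) (G : SimpleGraph (Fin d)) :
    interior (Qpoly d G) = {x | (∀ i, -1 < x i) ∧ ∀ i j, G.Adj i j → x i + x j < 1} := by
  refine Subset.antisymm (fun x hx => ⟨fun i => ?_, fun i j hij => ?_⟩) (interior_maximal ?_ ?_)
  · have hsub : Qpoly d G ⊆ (fun y => y i) ⁻¹' Ici (-1) := fun y hy => hy.1 i
    simpa using (isOpenMap_eval i).interior_preimage_subset_preimage_interior (interior_mono hsub hx)
  · have hsub : Qpoly d G ⊆ (fun y => y i + y j) ⁻¹' Iic 1 := fun y hy => hy.2 i j hij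
    simpa using (isOpenMap_apply_add_apply i j).interior_preimage_subset_preimage_interior
      (interior_mono hsub hx)
  · exact fun x hx => ⟨fun i => (hx.1 i).le, fun i j hij => (hx.2 i j hij).le⟩
  · simp only [ofPred_and, ofPred_forall]
    refine (isOpen_iInter_of_finite fun i => isOpen_lt continuous_const (continuous_apply i)).inter
      (isOpen_iInter_of_finite fun i => isOpen_iInter_of_finite fun j =>
        isOpen_iInter_of_finite fun _ => isOpen_lt (by fun_prop) continuous_const)

theorem stmt6_general (d : ℕ) (G : SimpleGraph (Fin d))
    (hiso : ∀ i : Fin d, ∃ j, G.Adj i j) :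
    interior (Qpoly d G) ∩ {x : Fin d → ℝ | ∀ i, ∃ z : ℤ, x i = (z : ℝ)} = {0} := by
  ext x
  simp only [interior_Qpoly, mem_inter_iff, mem_ofPred_eq, mem_singleton_iff]
  constructor
  · rintro ⟨⟨hlow, hedge⟩, hint⟩
    funext i
    obtain ⟨j, hij⟩ := hiso i
    obtain ⟨z, hz⟩ := hint i
    obtain ⟨w, hw⟩ := hint j
    have hz' : -1 < z := by exact_mod_cast hz ▸ hlow i
    have hw' : -1 < w := by exact_mod_cast hw ▸ hlow j
    have hzw : z + w < 1 := by exact_mod_cast hz ▸ hw ▸ hedge i j hij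
    simp [hz, show z = 0 by omega]
  · rintro rfl
    exact ⟨⟨fun _ => by norm_num, fun _ _ _ => by norm_num⟩, fun _ => ⟨0, by simp⟩⟩

/-- the origin is the unique lattice point in the interior of `Q(G)`. -/
theorem stmt6 (d : ℕ) (hd : 1 ≤ d) (G : SimpleGraph (Fin d))
    (hiso : ∀ i : Fin d, ∃ j, G.Adj i j) :
    interior (Qpoly d G) ∩ {x : Fin d → ℝ | ∀ i, ∃ z : ℤ, x i = (z : ℝ)} = {0} :=
  stmt6_general d G hiso
end

section
/- The dual polytope Q(G)^∨ = {x ∈ ℝ^d : ⟨x,y⟩ ≤ 1 for all y ∈ Q(G)} equals the convex hull of the finite set V = {e_i + e_j : (i,j) ∈ E(G)} ∪ {−e_1, …, −e_d}, and V is exactly the set of vertices (extreme points) of Q(G)^∨. In particular, Q(G)^∨ is a lattice polytope. -/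
open Set Pointwise

/-!
The inequalities defining `Q(G)` are exactly `⟨v, ·⟩ ≤ 1` for `v ∈ V`, so `Q(G) = V^∨` and
`Q(G)^∨ = V^∨∨`. As `0 = ((e_i + e_j) + (-e_i) + (-e_j)) / 3` lies in `conv V` for any edge `ij`,
separating a point from the closed convex set `conv V` gives the bipolar identity
`V^∨∨ = conv V`. Every `v ∈ V` is an exposed point of `conv V`: on `V`, the functional
`x ↦ x_i + x_j` is maximised only at `e_i + e_j`, and `x ↦ -x_i` only at `-e_i`.
-/

section Polar

variable {d : ℕ}

theorem mem_polarDual {P : Set (Fin d → ℝ)} {x : Fin d → ℝ} :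
    x ∈ polarDual P ↔ ∀ y ∈ P, x ⬝ᵥ y ≤ 1 :=
  Iff.rfl

theorem polarDual_anti {P P' : Set (Fin d → ℝ)} (h : P ⊆ P') : polarDual P' ⊆ polarDual P :=
  fun _ hx y hy => hx y (h hy)

theorem convex_polarDual (P : Set (Fin d → ℝ)) : Convex ℝ (polarDual P) := by
  have : polarDual P = ⋂ y ∈ P, {x | x ⬝ᵥ y ≤ 1} := by ext; simp [mem_polarDual]
  rw [this]
  exact convex_iInter₂ fun y _ =>
    convex_halfSpace_le ((dotProductBilin ℝ ℝ).flip y).isLinear 1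

theorem subset_polarDual_polarDual (P : Set (Fin d → ℝ)) : P ⊆ polarDual (polarDual P) :=
  fun x hx => mem_polarDual.2 fun y hy => by
    rw [dotProduct_comm]
    exact mem_polarDual.1 hy x hx

theorem polarDual_polarDual_subset {C : Set (Fin d → ℝ)} (hconv : Convex ℝ C)
    (hclosed : IsClosed C) (h0 : 0 ∈ C) : polarDual (polarDual C) ⊆ C := by
  intro x hx
  by_contra hxC
  obtain ⟨f, u, hfC, hux⟩ := geometric_hahn_banach_closed_point hconv hclosed hxC
  have hu : 0 < u := by simpa using hfC 0 h0
  set w : Fin d → ℝ := fun i => f (Pi.single i 1)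
  have hf : ∀ z, f z = w ⬝ᵥ z := by
    have : f.toLinearMap = dotProductBilin ℝ ℝ w := by
      ext i
      simp [w, dotProductBilin]
    exact fun z => LinearMap.congr_fun this z
  have hy : u⁻¹ • w ∈ polarDual C := mem_polarDual.2 fun z hz => by
    rw [smul_dotProduct, smul_eq_mul, ← hf, inv_mul_le_one₀ hu]
    exact (hfC z hz).le
  have := mem_polarDual.1 hx _ hy
  rw [dotProduct_comm, smul_dotProduct, smul_eq_mul, ← hf, inv_mul_le_one₀ hu] at this
  linarith

theorem polarDual_polarDual_eq_convexHull {S : Set (Fin d → ℝ)} (hS : S.Finite)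
    (h0 : 0 ∈ convexHull ℝ S) : polarDual (polarDual S) = convexHull ℝ S :=
  subset_antisymm
    ((polarDual_anti (polarDual_anti (subset_convexHull ℝ S))).trans
      (polarDual_polarDual_subset (convex_convexHull ℝ S) (hS.isClosed_convexHull (𝕜 := ℝ)) h0))
    (convexHull_min (subset_polarDual_polarDual S) (convex_polarDual _))

end Polar

section Exposed

variable {E : Type*} [AddCommGroup E] [Module ℝ E]

theorem convex_setOf_lt_or_eq (l : E →ₗ[ℝ] ℝ) (v : E) : Convex ℝ {x | l x < l v ∨ x = v} := by
  refine convex_iff_forall_pos.2 fun x hx y hy a b ha hb hab => ?_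
  have hv : l v = a * l v + b * l v := by rw [← add_mul, hab, one_mul]
  simp only [Set.mem_ofPred_eq, map_add, map_smul, smul_eq_mul]
  rcases hx with hx | rfl <;> rcases hy with hy | rfl
  · left; nlinarith
  · left; nlinarith
  · left; nlinarith
  · exact Or.inr (Convex.combo_self hab _)

theorem mem_extremePoints_convexHull_of_lt {S : Set E} {v : E} (l : E →ₗ[ℝ] ℝ) (hv : v ∈ S)
    (hlt : ∀ w ∈ S, w ≠ v → l w < l v) : v ∈ (convexHull ℝ S).extremePoints ℝ := by
  have hS : convexHull ℝ S ⊆ {x | l x < l v ∨ x = v} :=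
    convexHull_min (fun w hw => (eq_or_ne w v).elim Or.inr fun h => Or.inl (hlt w hw h))
      (convex_setOf_lt_or_eq l v)
  have hsdiff : convexHull ℝ S \ {v} = convexHull ℝ S ∩ {x | l x < l v} := by
    ext x
    constructor
    · rintro ⟨hx, hxv⟩
      exact ⟨hx, (hS hx).resolve_right hxv⟩
    · rintro ⟨hx, hxv⟩
      exact ⟨hx, fun h => hxv.ne (congrArg l h)⟩
  rw [(convex_convexHull ℝ S).mem_extremePoints_iff_convex_sdiff, hsdiff]
  exact ⟨subset_convexHull ℝ S hv, (convex_convexHull ℝ S).inter (convex_halfSpace_lt l.isLinear _)⟩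

end Exposed

section Graph

variable {d : ℕ} (G : SimpleGraph (Fin d))

theorem Vset_finite : (Vset d G).Finite :=
  ((Set.finite_range fun p : Fin d × Fin d => (Pi.single p.1 1 + Pi.single p.2 1 : Fin d → ℝ)).union
    (Set.finite_range fun i : Fin d => (-Pi.single i 1 : Fin d → ℝ))).subset <| by
    rintro x (⟨i, j, -, rfl⟩ | ⟨i, rfl⟩)
    exacts [Or.inl ⟨(i, j), rfl⟩, Or.inr ⟨i, rfl⟩]

theorem Qpoly_eq_polarDual_Vset : Qpoly d G = polarDual (Vset d G) := by
  ext x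
  constructor
  · rintro ⟨hneg, hadj⟩
    refine mem_polarDual.2 ?_
    rintro y (⟨i, j, hij, rfl⟩ | ⟨i, rfl⟩)
    · simpa [dotProduct_add] using hadj i j hij
    · simpa [neg_le] using hneg i
  · intro h
    rw [mem_polarDual] at h
    exact ⟨fun i => by simpa [neg_le] using h _ (Or.inr ⟨i, rfl⟩),
      fun i j hij => by simpa [dotProduct_add] using h _ (Or.inl ⟨i, j, hij, rfl⟩)⟩

theorem zero_mem_convexHull_Vset {i j : Fin d} (hij : G.Adj i j) :
    0 ∈ convexHull ℝ (Vset d G) := by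
  refine mem_convexHull_of_exists_fintype (fun _ : Fin 3 => (1 / 3 : ℝ))
    ![Pi.single i 1 + Pi.single j 1, -Pi.single i 1, -Pi.single j 1] (by simp) (by norm_num)
    (fun k => ?_) (by simp [Fin.sum_univ_three])
  fin_cases k
  exacts [Or.inl ⟨i, j, hij, rfl⟩, Or.inr ⟨i, rfl⟩, Or.inr ⟨j, rfl⟩]

theorem add_single_mem_extremePoints {i j : Fin d} (hij : G.Adj i j) :
    Pi.single i 1 + Pi.single j 1 ∈ (convexHull ℝ (Vset d G)).extremePoints ℝ := by
  refine mem_extremePoints_convexHull_of_lt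
    (LinearMap.proj (R := ℝ) (φ := fun _ : Fin d => ℝ) i + LinearMap.proj j)
    (Or.inl ⟨i, j, hij, rfl⟩) ?_
  rintro w (⟨a, b, hab, rfl⟩ | ⟨a, rfl⟩) hw
  · have := hab.ne
    simp only [LinearMap.add_apply, LinearMap.coe_proj, Function.eval, Pi.add_apply,
      Pi.single_apply]
    split_ifs <;> subst_vars <;> simp_all [add_comm]
  · simp only [LinearMap.add_apply, LinearMap.coe_proj, Function.eval, Pi.add_apply,
      Pi.neg_apply, Pi.single_apply]
    split_ifs <;> norm_num

theorem neg_single_mem_extremePoints (i : Fin d) :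
    -Pi.single i 1 ∈ (convexHull ℝ (Vset d G)).extremePoints ℝ := by
  refine mem_extremePoints_convexHull_of_lt
    (-LinearMap.proj (R := ℝ) (φ := fun _ : Fin d => ℝ) i) (Or.inr ⟨i, rfl⟩) ?_
  rintro w (⟨a, b, -, rfl⟩ | ⟨a, rfl⟩) hw
  · simp only [LinearMap.neg_apply, LinearMap.coe_proj, Function.eval, Pi.add_apply,
      Pi.neg_apply, Pi.single_apply]
    split_ifs <;> norm_num
  · simp only [LinearMap.neg_apply, LinearMap.coe_proj, Function.eval, Pi.neg_apply,
      Pi.single_apply]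
    split_ifs <;> simp_all

theorem extremePoints_convexHull_Vset :
    (convexHull ℝ (Vset d G)).extremePoints ℝ = Vset d G := by
  refine subset_antisymm extremePoints_convexHull_subset ?_
  rintro v (⟨i, j, hij, rfl⟩ | ⟨i, rfl⟩)
  exacts [add_single_mem_extremePoints G hij, neg_single_mem_extremePoints G i]

theorem exists_intCast_eq_of_mem_Vset {v : Fin d → ℝ} (hv : v ∈ Vset d G) (k : Fin d) :
    ∃ z : ℤ, v k = z := by
  rcases hv with ⟨i, j, -, rfl⟩ | ⟨i, rfl⟩
  · exact ⟨(Pi.single i 1 + Pi.single j 1 : Fin d → ℤ) k, by simp [Pi.single_apply]⟩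
  · exact ⟨(-Pi.single i 1 : Fin d → ℤ) k, by simp [Pi.single_apply]⟩

end Graph

/-- `Q(G)^∨` is the convex hull of
`V = {e_i+e_j : (i,j) ∈ E(G)} ∪ {−e_i}`, whose vertex set is exactly `V`;
in particular `Q(G)^∨` is a lattice polytope. -/
theorem stmt7 (d : ℕ) (hd : 1 ≤ d) (G : SimpleGraph (Fin d))
    (hiso : ∀ i : Fin d, ∃ j, G.Adj i j) :
    polarDual (Qpoly d G) = convexHull ℝ (Vset d G) ∧
    Set.extremePoints ℝ (polarDual (Qpoly d G)) = Vset d G ∧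
    ∀ v ∈ Set.extremePoints ℝ (polarDual (Qpoly d G)), ∀ i, ∃ z : ℤ, v i = (z : ℝ) := by
  obtain ⟨j, hj⟩ := hiso ⟨0, hd⟩
  have hdual : polarDual (Qpoly d G) = convexHull ℝ (Vset d G) := by
    rw [Qpoly_eq_polarDual_Vset]
    exact polarDual_polarDual_eq_convexHull (Vset_finite G) (zero_mem_convexHull_Vset G hj)
  have hext : Set.extremePoints ℝ (polarDual (Qpoly d G)) = Vset d G := by
    rw [hdual, extremePoints_convexHull_Vset]
  refine ⟨hdual, hext, fun v hv => ?_⟩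
  rw [hext] at hv
  exact exists_intCast_eq_of_mem_Vset G hv
end

section
/- Let D = conv({e_i + e_j : (i,j) ∈ E(G)} ∪ {−e_1, …, −e_d}) ⊆ ℝ^d. Then D is a Fano polytope: D has dimension d, and the origin is the unique lattice point belonging to the topological interior of D. -/
/-! The origin is an interior point of `D`: each vertex `i` has a neighbour `j`, so `D` contains
`((e_i + e_j) + (-e_j)) / 2 = e_i / 2` and `-e_i`, hence a small box around the origin.
Conversely every vertex of `D` lies in the cube `[-1, 1]^d`, whose interior contains no lattice
point other than the origin. -/

open Set Pointwise

theorem Convex.pi_single_mem_of_mem_Icc {ι : Type*} [DecidableEq ι] {C : Set (ι → ℝ)}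
    (hC : Convex ℝ C) {i : ι} {a b t : ℝ} (ha : Pi.single i a ∈ C) (hb : Pi.single i b ∈ C)
    (ht : t ∈ Icc a b) : Pi.single i t ∈ C :=
  (hC.linear_preimage (LinearMap.single ℝ (fun _ => ℝ) i)).ordConnected.out ha hb ht

theorem Convex.zero_mem_interior_of_pi_single_mem {ι : Type*} [Fintype ι] [DecidableEq ι]
    [Nonempty ι] {C : Set (ι → ℝ)} (hC : Convex ℝ C) {r : ℝ} (hr : 0 < r)
    (hneg : ∀ i, Pi.single i (-r) ∈ C) (hpos : ∀ i, Pi.single i r ∈ C) :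
    (0 : ι → ℝ) ∈ interior C := by
  set n : ℝ := (Fintype.card ι : ℝ)
  have hn : 0 < n := Nat.cast_pos.mpr Fintype.card_pos
  refine mem_interior_iff_mem_nhds.mpr (Metric.mem_nhds_iff.mpr ⟨r / n, by positivity, ?_⟩)
  -- `x` in the box of half-width `r / n` is the average of the points `n x_i e_i ∈ [-r e_i, r e_i]`.
  intro x hx
  rw [Metric.mem_ball, dist_zero_right] at hx
  have hcoord : ∀ i, Pi.single i (n * x i) ∈ C := fun i => by
    have hxi : |x i| < r / n := (norm_le_pi_norm x i).trans_lt hx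
    rw [lt_div_iff₀ hn, ← abs_of_pos hn, ← abs_mul, mul_comm, abs_lt] at hxi
    exact hC.pi_single_mem_of_mem_Icc (hneg i) (hpos i) ⟨by linarith, by linarith⟩
  have hx_avg : ∑ i, (1 / n) • Pi.single i (n * x i) = x := by
    simp_rw [← Pi.single_smul, smul_eq_mul, one_div, inv_mul_cancel_left₀ hn.ne']
    exact Finset.univ_sum_single x
  rw [← hx_avg]
  refine hC.sum_mem (fun _ _ => by positivity) ?_ (fun i _ => hcoord i)
  rw [Finset.sum_const, Finset.card_univ, nsmul_eq_mul, mul_one_div_cancel hn.ne']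

section Vset

variable {d : ℕ} {G : SimpleGraph (Fin d)}

theorem pi_single_neg_one_mem_convexHull_Vset (i : Fin d) :
    Pi.single i (-1) ∈ convexHull ℝ (Vset d G) :=
  subset_convexHull ℝ _ (Or.inr ⟨i, Pi.single_neg i 1⟩)

theorem pi_single_half_mem_convexHull_Vset {i : Fin d} (hi : ∃ j, G.Adj i j) :
    Pi.single i (1 / 2) ∈ convexHull ℝ (Vset d G) := by
  obtain ⟨j, hij⟩ := hi
  have hedge : Pi.single i 1 + Pi.single j 1 ∈ convexHull ℝ (Vset d G) :=
    subset_convexHull ℝ _ (Or.inl ⟨i, j, hij, rfl⟩)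
  have hmid := convex_convexHull ℝ (Vset d G) hedge (pi_single_neg_one_mem_convexHull_Vset j)
    (by norm_num : (0 : ℝ) ≤ 1 / 2) (by norm_num : (0 : ℝ) ≤ 1 / 2) (by norm_num)
  convert hmid using 1
  ext k
  simp only [Pi.add_apply, Pi.smul_apply, Pi.single_apply, smul_eq_mul]
  split_ifs <;> norm_num

theorem zero_mem_interior_convexHull_Vset (hd : 1 ≤ d) (hiso : ∀ i : Fin d, ∃ j, G.Adj i j) :
    (0 : Fin d → ℝ) ∈ interior (convexHull ℝ (Vset d G)) := by
  have : Nonempty (Fin d) := ⟨⟨0, hd⟩⟩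
  refine (convex_convexHull ℝ _).zero_mem_interior_of_pi_single_mem (r := 1 / 2) (by norm_num)
    (fun i => ?_) (fun i => pi_single_half_mem_convexHull_Vset (hiso i))
  exact (convex_convexHull ℝ _).pi_single_mem_of_mem_Icc (pi_single_neg_one_mem_convexHull_Vset i)
    (pi_single_half_mem_convexHull_Vset (hiso i)) (by norm_num)

theorem convexHull_Vset_subset_pi_Icc :
    convexHull ℝ (Vset d G) ⊆ univ.pi fun _ => Icc (-1 : ℝ) 1 := by
  refine convexHull_min ?_ (convex_pi fun _ _ => convex_Icc _ _)
  rintro x (⟨i, j, hij, rfl⟩ | ⟨i, rfl⟩) k -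
  · simp only [Pi.add_apply, Pi.single_apply]
    split_ifs with hki hkj
    · exact absurd (hki.symm.trans hkj) hij.ne
    all_goals norm_num
  · simp only [Pi.neg_apply, Pi.single_apply]
    split_ifs <;> norm_num

end Vset

theorem Int.eq_zero_of_cast_mem_Ioo {z : ℤ} (hz : (z : ℝ) ∈ Ioo (-1) 1) : z = 0 := by
  obtain ⟨hlo, hhi⟩ := hz
  have : (-1 : ℤ) < z := by exact_mod_cast hlo
  have : z < 1 := by exact_mod_cast hhi
  omega

/-- `D = conv({e_i+e_j : (i,j) ∈ E(G)} ∪ {−e_i})` is a Fano polytope: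
it is full-dimensional and the origin is its unique interior lattice point. -/
theorem stmt16 (d : ℕ) (hd : 1 ≤ d) (G : SimpleGraph (Fin d))
    (hiso : ∀ i : Fin d, ∃ j, G.Adj i j) :
    affineSpan ℝ (convexHull ℝ (Vset d G)) = ⊤ ∧
    interior (convexHull ℝ (Vset d G)) ∩
        {x : Fin d → ℝ | ∀ i, ∃ z : ℤ, x i = (z : ℝ)} = {0} := by
  have h0 := zero_mem_interior_convexHull_Vset hd hiso
  refine ⟨?_, eq_singleton_iff_unique_mem.mpr ⟨⟨h0, fun _ => ⟨0, by simp⟩⟩, ?_⟩⟩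
  · rw [affineSpan_convexHull]
    exact affineSpan_eq_top_of_nonempty_interior ⟨0, h0⟩
  · rintro x ⟨hx, hxint⟩
    have hbox := interior_mono convexHull_Vset_subset_pi_Icc hx
    rw [interior_pi_set finite_univ] at hbox
    funext i
    obtain ⟨z, hz⟩ := hxint i
    have hzbox : (z : ℝ) ∈ Ioo (-1) 1 := by simpa [hz] using hbox i (mem_univ i)
    rw [hz, Int.eq_zero_of_cast_mem_Ioo hzbox, Int.cast_zero, Pi.zero_apply]
end

section
/- Suppose G contains an odd cycle on the vertices 1, 2, …, 2k+1 (with k ≥ 1), i.e., (i, i+1) ∈ E(G) for 1 ≤ i ≤ 2k and (1, 2k+1) ∈ E(G). Let A ⊂ ℤ^{d+1} consist of (0,…,0,1), the vectors (e_i + e_j, 1) for edges (i,j) ∈ E(G), and the vectors (−e_i, 1) for 1 ≤ i ≤ d, and let u = (1, …, 1, 0, …, 0, k+1) ∈ ℤ^{d+1} be the vector whose first 2k+1 coordinates equal 1, whose next d−(2k+1) coordinates equal 0, and whose last coordinate equals k+1. Then u is a nonnegative rational linear combination of elements of A, but u is not a nonnegative integer linear combination of elements of A. -/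
open Set Pointwise

/-!
Twice `u` is the sum of `(0, 1)` and of the vectors `(e_i + e_{i+1}, 1)` over the `2k + 1` edges of
the cycle, which gives the rational certificate with all coefficients `1/2`. For integrality, the
functional `φ x = 2 x_{d+1} - (x_1 + ⋯ + x_d)` takes the values `2`, `0`, `3` on `A`, hence never
the value `1` on `ℤ_{≥0} A`, while `φ u = 2 (k + 1) - (2k + 1) = 1`.
-/

open Finset

theorem Fin.sum_add_comp_add_one {M : Type*} [AddCommMonoid M] {n : ℕ} [NeZero n]
    (g : Fin n → M) : ∑ m, (g m + g (m + 1)) = 2 • ∑ m, g m := by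
  rw [sum_add_distrib, two_smul]
  congr 1
  exact Equiv.sum_comp (Equiv.addRight 1) g

theorem Fin.sum_single_castLE_apply {M : Type*} [AddCommMonoid M] {n d : ℕ} (hn : n ≤ d)
    (x : M) (p : Fin d) :
    (∑ m : Fin n, Pi.single (Fin.castLE hn m) x : Fin d → M) p = if (p : ℕ) < n then x else 0 := by
  rw [Finset.sum_apply]
  split_ifs with hp
  · rw [Fintype.sum_eq_single ⟨p, hp⟩ fun m hm => ?_]
    · simp
    · rw [Pi.single_apply, if_neg fun h => hm (Fin.ext (by simp [h]))]
  · refine sum_eq_zero fun m _ => ?_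
    rw [Pi.single_apply, if_neg]
    rintro rfl
    exact hp m.isLt

theorem Fin.sum_sum_single_castLE {M : Type*} [AddCommMonoid M] {n d : ℕ} (hn : n ≤ d) (x : M) :
    ∑ p, (∑ m : Fin n, Pi.single (Fin.castLE hn m) x : Fin d → M) p = n • x := by
  simp only [Finset.sum_apply]
  rw [sum_comm]
  simp

theorem exists_finset_nonneg_rat_combination {ι n : Type*} {A : Set (n → ℤ)} (t : Finset ι)
    (f : ι → n → ℤ) (w : ι → ℚ) (hf : ∀ m ∈ t, f m ∈ A) (hw : ∀ m ∈ t, 0 ≤ w m)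
    (u : n → ℤ) (hu : ∀ i, (u i : ℚ) = ∑ m ∈ t, w m * f m i) :
    ∃ (s : Finset (n → ℤ)) (c : (n → ℤ) → ℚ),
      ↑s ⊆ A ∧ (∀ a ∈ s, 0 ≤ c a) ∧ ∀ i, (u i : ℚ) = ∑ a ∈ s, c a * (a i : ℚ) := by
  classical
  refine ⟨t.image f, fun a => ∑ m ∈ t with f m = a, w m, ?_, ?_, fun i => ?_⟩
  · simpa [Set.subset_def] using hf
  · intro a _
    exact sum_nonneg fun m hm => hw m (mem_filter.1 hm).1
  · rw [hu, sum_image' (fun m => w m * f m i) fun m _ => ?_]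
    rw [sum_mul]
    refine sum_congr rfl fun j hj => ?_
    rw [(mem_filter.1 hj).2]

section OddCycle

variable {d n : ℕ} (hn : n + 1 ≤ d)

def cycleFamily : Option (Fin (n + 1)) → Fin (d + 1) → ℤ
  | none => Fin.snoc 0 1
  | some m => Fin.snoc (Pi.single (Fin.castLE hn m) 1 + Pi.single (Fin.castLE hn (m + 1)) 1) 1

variable {hn} in
theorem adj_castLE_add_one {G : SimpleGraph (Fin d)}
    (hpath : ∀ i : ℕ, ∀ h : i + 1 ≤ n, G.Adj ⟨i, by omega⟩ ⟨i + 1, by omega⟩)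
    (hclose : G.Adj ⟨0, by omega⟩ ⟨n, by omega⟩) (m : Fin (n + 1)) :
    G.Adj (Fin.castLE hn m) (Fin.castLE hn (m + 1)) := by
  induction m using Fin.lastCases with
  | last => rw [Fin.last_add_one]; exact hclose.symm
  | cast i => rw [Fin.coeSucc_eq_succ]; exact hpath i i.isLt

theorem cycleFamily_mem_Aset {G : SimpleGraph (Fin d)}
    (hpath : ∀ i : ℕ, ∀ h : i + 1 ≤ n, G.Adj ⟨i, by omega⟩ ⟨i + 1, by omega⟩)
    (hclose : G.Adj ⟨0, by omega⟩ ⟨n, by omega⟩) (x : Option (Fin (n + 1))) :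
    cycleFamily hn x ∈ Aset d G := by
  cases x with
  | none => exact Or.inl rfl
  | some m => exact Or.inr (Or.inl ⟨_, _, adj_castLE_add_one hpath hclose m, rfl⟩)

theorem sum_cycleFamily {t : ℤ} (ht : 2 * t = n + 2) :
    ∑ x, cycleFamily hn x = 2 • Fin.snoc (∑ m : Fin (n + 1), Pi.single (Fin.castLE hn m) 1) t := by
  rw [Fintype.sum_option]
  ext i
  induction i using Fin.lastCases with
  | last =>
    simp only [cycleFamily, Pi.add_apply, Pi.smul_apply, Fin.snoc_last, Finset.sum_apply, sum_const,
      card_univ, Fintype.card_fin, nsmul_eq_mul]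
    push_cast
    linarith
  | cast p =>
    simp [cycleFamily, Finset.sum_apply, Fin.sum_add_comp_add_one]

theorem snoc_sum_single_castLE (t : ℤ) :
    (fun i : Fin (d + 1) => if (i : ℕ) < n + 1 then 1 else if (i : ℕ) = d then t else 0) =
      Fin.snoc (∑ m : Fin (n + 1), Pi.single (Fin.castLE hn m) 1) t := by
  ext i
  induction i using Fin.lastCases with
  | last => simp [show ¬d < n + 1 by omega]
  | cast p =>
    simp only [Fin.val_castSucc, Fin.snoc_castSucc]
    rw [Fin.sum_single_castLE_apply, if_neg p.isLt.ne]

end OddCycle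

def grading (d : ℕ) : (Fin (d + 1) → ℤ) →+ ℤ :=
  AddMonoidHom.mk' (fun x => 2 * x (Fin.last d) - ∑ i : Fin d, x i.castSucc) fun x y => by
    simp only [Pi.add_apply, sum_add_distrib]
    ring

theorem grading_snoc {d : ℕ} (v : Fin d → ℤ) (t : ℤ) :
    grading d (Fin.snoc v t) = 2 * t - ∑ i, v i := by
  simp [grading]

def nonnegNeOne : AddSubmonoid ℤ where
  carrier := {z | 0 ≤ z ∧ z ≠ 1}
  zero_mem' := by norm_num
  add_mem' := by
    rintro a b ⟨ha0, ha1⟩ ⟨hb0, hb1⟩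
    exact ⟨by omega, by omega⟩

theorem grading_mem_of_mem_closure {d : ℕ} {G : SimpleGraph (Fin d)} {a : Fin (d + 1) → ℤ}
    (ha : a ∈ AddSubmonoid.closure (Aset d G)) : grading d a ∈ nonnegNeOne := by
  suffices AddSubmonoid.closure (Aset d G) ≤ nonnegNeOne.comap (grading d) from this ha
  rw [AddSubmonoid.closure_le]
  rintro a (rfl | ⟨i, j, -, rfl⟩ | ⟨i, rfl⟩) <;>
    simp [grading_snoc, sum_add_distrib, nonnegNeOne]

/-- if `G` contains the odd cycle `(1,2,…,2k+1)` then the lattice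
point `u = (1,…,1,0,…,0,k+1)` lies in `ℚ_{≥0}A ∩ ℤ^{d+1}` but not in `ℤ_{≥0}A`. -/
theorem stmt17 (d k : ℕ) (hd : 2 * k + 1 ≤ d)
    (G : SimpleGraph (Fin d))
    (hpath : ∀ i : ℕ, ∀ h : i + 1 ≤ 2 * k,
      G.Adj ⟨i, by omega⟩ ⟨i + 1, by omega⟩)
    (hclose : G.Adj ⟨0, by omega⟩ ⟨2 * k, by omega⟩)
    (u : Fin (d + 1) → ℤ)
    (hu : u = fun i : Fin (d + 1) => if (i : ℕ) < 2 * k + 1 then 1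
      else if (i : ℕ) = d then (k : ℤ) + 1 else 0) :
    (∃ (s : Finset (Fin (d + 1) → ℤ)) (c : (Fin (d + 1) → ℤ) → ℚ),
      ↑s ⊆ Aset d G ∧ (∀ a ∈ s, 0 ≤ c a) ∧
        ∀ i, (u i : ℚ) = ∑ a ∈ s, c a * (a i : ℚ)) ∧
    u ∉ AddSubmonoid.closure (Aset d G) := by
  rw [hu, snoc_sum_single_castLE hd]
  constructor
  · have htwo := sum_cycleFamily hd (t := (k : ℤ) + 1) (by push_cast; ring)
    refine exists_finset_nonneg_rat_combination univ (cycleFamily hd) (fun _ => 1 / 2)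
      (fun x _ => cycleFamily_mem_Aset hd hpath hclose x) (fun _ _ => by norm_num) _ fun i => ?_
    have hi := congrArg (fun v : Fin (d + 1) → ℤ => (v i : ℚ)) htwo
    simp only [Finset.sum_apply, Pi.smul_apply, nsmul_eq_mul, Int.cast_sum, Int.cast_mul] at hi
    rw [← mul_sum, hi]
    ring
  · intro hmem
    have h := grading_mem_of_mem_closure hmem
    rw [grading_snoc, Fin.sum_sum_single_castLE] at h
    exact h.2 (by ring)
end

section
/- The topological interior of 2·FRAC(G) contains no lattice point (interior(2·FRAC(G)) ∩ ℤ^d = ∅), whereas the lattice point (1, 1, …, 1) belongs to the topological interior of 3·FRAC(G). Consequently, 3 is the smallest positive integer δ such that δ·FRAC(G) contains a lattice point in its interior. -/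
open Set Pointwise

/-!
A lattice point in the interior of `c • FRAC(G)` has strictly positive, hence `≥ 1`, integer
coordinates, while the two endpoints of any edge have coordinate sum `< c`; so `c > 2`.
Conversely `(1,…,1)` satisfies all inequalities of `3 • FRAC(G)` strictly.
-/

lemma mem_smul_FRAC_iff {d : ℕ} (G : SimpleGraph (Fin d)) {c : ℝ} (hc : 0 < c)
    (x : Fin d → ℝ) :
    x ∈ c • FRAC d G ↔ (∀ i, 0 ≤ x i) ∧ ∀ i j, G.Adj i j → x i + x j ≤ c := by
  simp only [mem_smul_set_iff_inv_smul_mem₀ hc.ne', FRAC, mem_ofPred_eq, Pi.smul_apply,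
    smul_eq_mul, ← mul_add, inv_mul_le_iff₀ hc, mul_one, inv_pos, hc, mul_nonneg_iff_of_pos_left]

lemma LinearMap.lt_of_mem_interior {E : Type*} [AddCommGroup E] [Module ℝ E] [TopologicalSpace E]
    [ContinuousAdd E] [ContinuousSMul ℝ E] {s : Set E} {φ : E →ₗ[ℝ] ℝ} {a : ℝ} {x v : E}
    (hs : ∀ y ∈ s, φ y ≤ a) (hv : 0 < φ v) (hx : x ∈ interior s) : φ x < a := by
  have hcurve : Filter.Tendsto (fun t : ℝ => x + t • v) (nhdsWithin 0 (Ioi 0)) (nhds x) := by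
    have : Continuous fun t : ℝ => x + t • v := by fun_prop
    simpa using (this.tendsto 0).mono_left nhdsWithin_le_nhds
  obtain ⟨t, hts, ht⟩ :=
    ((hcurve.eventually (mem_interior_iff_mem_nhds.1 hx)).and self_mem_nhdsWithin).exists
  have := hs _ hts
  simp only [map_add, map_smul, smul_eq_mul] at this
  linarith [mul_pos (show (0 : ℝ) < t from ht) hv]

lemma interior_smul_FRAC {d : ℕ} (G : SimpleGraph (Fin d)) {c : ℝ} (hc : 0 < c) :
    interior (c • FRAC d G) = {x | (∀ i, 0 < x i) ∧ ∀ i j, G.Adj i j → x i + x j < c} := by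
  apply Subset.antisymm
  · intro x hx
    have hle := fun y hy => (mem_smul_FRAC_iff G hc y).1 hy
    let e (k : Fin d) : (Fin d → ℝ) →ₗ[ℝ] ℝ := LinearMap.proj k
    refine ⟨fun i => ?_, fun i j hij => ?_⟩
    · have := LinearMap.lt_of_mem_interior (φ := -e i) (a := 0)
        (v := -Pi.single i 1) (fun y hy => by simpa [e] using (hle y hy).1 i) (by simp [e]) hx
      simpa [e] using this
    · exact LinearMap.lt_of_mem_interior (φ := e i + e j) (a := c)
        (v := Pi.single i 1) (fun y hy => by simpa [e] using (hle y hy).2 i j hij)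
        (by simp [e, hij.ne'.symm]) hx
  · refine interior_maximal (fun x hx => (mem_smul_FRAC_iff G hc x).2
      ⟨fun i => (hx.1 i).le, fun i j hij => (hx.2 i j hij).le⟩) ?_
    simp only [ofPred_and, ofPred_forall]
    exact (isOpen_iInter_of_finite fun i => isOpen_lt continuous_const (continuous_apply i)).inter
      (isOpen_iInter_of_finite fun i => isOpen_iInter_of_finite fun j =>
        isOpen_iInter_of_finite fun _ => isOpen_lt (by fun_prop) continuous_const)

lemma two_lt_of_mem_interior_smul_FRAC {d : ℕ} {G : SimpleGraph (Fin d)} {i j : Fin d}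
    (hij : G.Adj i j) {c : ℝ} (hc : 0 < c) {x : Fin d → ℝ} (hx : x ∈ interior (c • FRAC d G))
    (hlat : ∀ i, ∃ z : ℤ, x i = (z : ℝ)) : 2 < c := by
  rw [interior_smul_FRAC G hc] at hx
  have one_le : ∀ k, 1 ≤ x k := fun k => by
    obtain ⟨z, hz⟩ := hlat k
    have := hx.1 k
    rw [hz] at this ⊢
    exact_mod_cast (show (0 : ℤ) < z by exact_mod_cast this)
  linarith [hx.2 i j hij, one_le i, one_le j]

/-- the interior of `2·FRAC(G)` contains no lattice point, the point
`(1,…,1)` is an interior lattice point of `3·FRAC(G)`, and hence `3` is the least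
positive integer `δ` such that `δ·FRAC(G)` has an interior lattice point. -/
theorem stmt18 (d : ℕ) (hd : 1 ≤ d) (G : SimpleGraph (Fin d))
    (hiso : ∀ i : Fin d, ∃ j, G.Adj i j) :
    interior ((2 : ℝ) • FRAC d G) ∩
        {x : Fin d → ℝ | ∀ i, ∃ z : ℤ, x i = (z : ℝ)} = ∅ ∧
    (fun _ : Fin d => (1 : ℝ)) ∈ interior ((3 : ℝ) • FRAC d G) ∧
    IsLeast {m : ℕ | 0 < m ∧ (interior ((m : ℝ) • FRAC d G) ∩
      {x : Fin d → ℝ | ∀ i, ∃ z : ℤ, x i = (z : ℝ)}).Nonempty} 3 := by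
  obtain ⟨j, hj⟩ := hiso ⟨0, hd⟩
  have one_mem : (fun _ : Fin d => (1 : ℝ)) ∈ interior ((3 : ℝ) • FRAC d G) := by
    rw [interior_smul_FRAC G three_pos]
    exact ⟨fun _ => one_pos, fun _ _ _ => by norm_num⟩
  refine ⟨?_, one_mem, ⟨three_pos, _, one_mem, fun _ => ⟨1, Int.cast_one.symm⟩⟩, ?_⟩
  · refine eq_empty_of_forall_notMem fun x ⟨hx, hlat⟩ => ?_
    exact lt_irrefl _ (two_lt_of_mem_interior_smul_FRAC hj two_pos hx hlat)
  · rintro m ⟨hm, x, hx, hlat⟩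
    have : (2 : ℝ) < m := two_lt_of_mem_interior_smul_FRAC hj (by exact_mod_cast hm) hx hlat
    exact_mod_cast this
end
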